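/- arXiv:math/0508575 — 3 statements merged into one kernel-verified Lean document; each statement's English description precedes it below -/
import Mathlib

section
/- Let C be a nontrivial 1-perfect code in the Johnson scheme J(2w+a, w) with w ≥ 1, a ≥ 0, and let k be a positive integer. If the polynomial σ_1(w,a,m) = m² − (2w+a+1)m + w(w+a) + 1 has no integer root m with 1 ≤ m ≤ k, then C is k-regular. -/
open scoped BigOperators

/-- A code in the Johnson scheme `J(n,w)`: a set of `w`-element subsets of `{1,…,n}`. -/
def IsJohnsonCode (n w : ℕ) (C : Set (Finset (Fin n))) : Prop :=
  ∀ c ∈ C, c.card = w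

/-- `C` is a 1-perfect code in `J(n,w)`: every `w`-subset of `{1,…,n}` is within Johnson
distance 1 (Johnson distance between `w`-sets `x`, `y` is `w - |x ∩ y|`) of exactly
one codeword of `C`. -/
def IsOnePerfect (n w : ℕ) (C : Set (Finset (Fin n))) : Prop :=
  IsJohnsonCode n w C ∧
    ∀ s : Finset (Fin n), s.card = w → ∃! c, c ∈ C ∧ w - (c ∩ s).card ≤ 1

/-- `C` is `k`-regular: (1) the number of codewords meeting a `k`-set `A` in exactly `i`
points depends only on `i`, and (2) for each `k`-set `A`, the number of codewords `c`
with `c ∩ A = I` depends only on `|I|` (for `I ⊆ A`). -/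
def IsKRegularCode (n k : ℕ) (C : Set (Finset (Fin n))) : Prop :=
  (∃ α : ℕ → ℕ, ∀ A : Finset (Fin n), A.card = k → ∀ i, i ≤ k →
      {c ∈ C | (c ∩ A).card = i}.ncard = α i) ∧
  (∀ A : Finset (Fin n), A.card = k → ∃ β : ℕ → ℕ,
      ∀ I : Finset (Fin n), I ⊆ A → {c ∈ C | c ∩ A = I}.ncard = β I.card)

/-!
Write `X_A(I)` for the number of codewords `c` with `c ∩ A = I`, and induct on `m = |A|`.
If `X_A(I)` depends only on `|I|` for all `m`-sets `A`, then for an `(m+1)`-set `A` the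
relation `X_{A ∖ u}(K) = X_A(K) + X_A(K ∪ {u})` determines every `X_A(I)` from `X_A(∅)`.
Counting the `w`-sets disjoint from `A` through their unique codeword at distance `≤ 1`
(a codeword disjoint from `A` accounts for `1 + w(n - w - |A|)` of them, one meeting `A` in a
single point for `n + 1 - w - |A|`, any other for none) yields `σ₁(m+1) · X_A(∅) = const`
with a constant independent of `A`; so `X_A(∅)` does not depend on `A` when `σ₁(m+1) ≠ 0`.
-/

open Finset

-- `σ₁(w, a, m)` of the paper, written in terms of `n = 2w + a`.
def sigmaOne (n w m : ℤ) : ℤ := m ^ 2 - (n + 1) * m + w * (n - w) + 1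

section

variable {α : Type*} [DecidableEq α]

def traceCount (C : Finset (Finset α)) (A I : Finset α) : ℕ := #{c ∈ C | c ∩ A = I}

theorem traceCount_erase (C : Finset (Finset α)) (A : Finset α) {K : Finset α} {u : α}
    (huK : u ∉ K) :
    traceCount C (A.erase u) K = traceCount C A K + traceCount C A (insert u K) := by
  rw [traceCount, traceCount, traceCount, ← card_union_of_disjoint, ← filter_or]
  · refine congrArg card (filter_congr fun c _ => ?_)
    rw [inter_erase]
    constructor
    · intro h
      by_cases hc : u ∈ c ∩ A
      · right; rw [← insert_erase hc, h]
      · left; rw [← erase_eq_of_notMem hc, h]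
    · rintro (h | h) <;> rw [h]
      · exact erase_eq_of_notMem huK
      · exact erase_insert huK
  · refine disjoint_filter.mpr ?_
    rintro c _ rfl h
    exact huK (h ▸ mem_insert_self u (c ∩ A))

theorem sum_traceCount_powersetCard (C : Finset (Finset α)) (A : Finset α) (j : ℕ) :
    ∑ I ∈ A.powersetCard j, traceCount C A I = #{c ∈ C | #(c ∩ A) = j} := by
  rw [card_eq_sum_card_fiberwise (f := (· ∩ A)) (t := A.powersetCard j)]
  · refine sum_congr rfl fun I hI => ?_
    rw [traceCount, filter_filter]
    refine congrArg card (filter_congr fun c _ => ?_)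
    have := (mem_powersetCard.mp hI).2
    grind
  · intro c hc
    simp only [coe_filter, Set.mem_ofPred_eq] at hc
    exact mem_powersetCard.mpr ⟨inter_subset_right, hc.2⟩

def IsTraceRegular (C : Finset (Finset α)) (m : ℕ) : Prop :=
  ∃ τ : ℕ → ℕ, ∀ A : Finset α, #A = m → ∀ I ⊆ A, traceCount C A I = τ #I

theorem isTraceRegular_zero (C : Finset (Finset α)) : IsTraceRegular C 0 :=
  ⟨fun _ => #C, fun A hA I hI => by
    obtain rfl := card_eq_zero.mp hA
    obtain rfl := subset_empty.mp hI
    simp [traceCount]⟩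

def alternatingSeq (τ : ℕ → ℕ) (t : ℕ) : ℕ → ℕ
  | 0 => t
  | i + 1 => τ i - alternatingSeq τ t i

theorem traceCount_eq_alternatingSeq {C : Finset (Finset α)} {m : ℕ} {τ : ℕ → ℕ}
    (hτ : ∀ A : Finset α, #A = m → ∀ I ⊆ A, traceCount C A I = τ #I) {A : Finset α}
    (hA : #A = m + 1) {I : Finset α} (hI : I ⊆ A) :
    traceCount C A I = alternatingSeq τ (traceCount C A ∅) #I := by
  induction I using Finset.induction_on with
  | empty => rfl
  | insert x I hx ih =>
    have hxA : x ∈ A := hI (mem_insert_self x I)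
    have hIA : I ⊆ A := (subset_insert x I).trans hI
    have hsum := traceCount_erase C A hx
    rw [hτ _ (by rw [card_erase_of_mem hxA, hA]; rfl) I (subset_erase.mpr ⟨hIA, hx⟩),
      ih hIA] at hsum
    rw [card_insert_of_notMem hx, alternatingSeq]
    omega

theorem card_filter_card_inter_eq_one {C : Finset (Finset α)} {m : ℕ} {τ : ℕ → ℕ}
    (hτ : ∀ A : Finset α, #A = m → ∀ I ⊆ A, traceCount C A I = τ #I) {D : Finset α}
    (hD : #D = m + 1) :
    (#{c ∈ C | #(c ∩ D) = 1} : ℤ) = (m + 1) * (τ 0 - traceCount C D ∅) := by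
  have hsingleton : ∀ I ∈ D.powersetCard 1, (traceCount C D I : ℤ) = τ 0 - traceCount C D ∅ := by
    intro I hI
    obtain ⟨⟨u, rfl⟩, hu⟩ : (∃ u, I = {u}) ∧ I ⊆ D := by
      rw [mem_powersetCard, card_eq_one] at hI
      exact hI.symm
    have hsum := traceCount_erase C D (notMem_empty u)
    rw [hτ _ (by rw [card_erase_of_mem (singleton_subset_iff.mp hu), hD]; rfl) ∅
      (empty_subset _), card_empty, insert_empty] at hsum
    omega
  rw [← sum_traceCount_powersetCard, Nat.cast_sum, sum_congr rfl hsingleton, sum_const,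
    card_powersetCard, hD, Nat.choose_one_right, nsmul_eq_mul]
  push_cast
  ring

theorem IsTraceRegular.succ {C : Finset (Finset α)} {m : ℕ} (h : IsTraceRegular C m)
    (hempty : ∀ A B : Finset α, #A = m + 1 → #B = m + 1 →
      traceCount C A ∅ = traceCount C B ∅) :
    IsTraceRegular C (m + 1) := by
  obtain ⟨τ, hτ⟩ := h
  by_cases hex : ∃ A₀ : Finset α, #A₀ = m + 1
  · obtain ⟨A₀, hA₀⟩ := hex
    refine ⟨alternatingSeq τ (traceCount C A₀ ∅), fun A hA I hI => ?_⟩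
    rw [traceCount_eq_alternatingSeq hτ hA hI, hempty A A₀ hA hA₀]
  · exact ⟨τ, fun A hA => absurd ⟨A, hA⟩ hex⟩

theorem card_filter_powersetCard_card_inter_eq (B c : Finset α) (j l : ℕ) :
    #{s ∈ B.powersetCard (j + l) | #(s ∩ c) = j} = (#(B ∩ c)).choose j * (#(B \ c)).choose l := by
  rw [← card_powersetCard, ← card_powersetCard, ← card_product]
  symm
  refine card_nbij' (fun p => p.1 ∪ p.2) (fun s => (s ∩ c, s \ c)) ?_ ?_ ?_ ?_
  · rintro ⟨P, Q⟩ h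
    simp only [coe_product, Set.mem_prod, mem_coe, mem_powersetCard] at h
    obtain ⟨⟨hP, rfl⟩, hQ, rfl⟩ := h
    have hPQ : Disjoint P Q := by grind [disjoint_left]
    have hPQc : (P ∪ Q) ∩ c = P := by grind
    simp only [coe_filter, mem_powersetCard, Set.mem_ofPred_eq, card_union_of_disjoint hPQ, hPQc]
    grind
  · intro s hs
    simp only [coe_filter, mem_powersetCard, Set.mem_ofPred_eq] at hs
    simp only [coe_product, Set.mem_prod, mem_coe, mem_powersetCard]
    grind [card_inter_add_card_sdiff]
  · rintro ⟨P, Q⟩ h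
    simp only [coe_product, Set.mem_prod, mem_coe, mem_powersetCard] at h
    simp only [Prod.mk.injEq]
    constructor <;> ext x <;> grind
  · intro s _
    dsimp only
    rw [union_comm, sdiff_union_inter]

variable [Fintype α]

theorem card_near_disjoint_eq {w : ℕ} (hw : 1 ≤ w) {c : Finset α} (hc : #c = w) (A : Finset α) :
    (#{s ∈ Aᶜ.powersetCard w | w ≤ #(c ∩ s) + 1} : ℤ) =
      (if #(c ∩ A) = 0 then 1 + w * (Fintype.card α - w - #A : ℤ) else 0) +
      (if #(c ∩ A) = 1 then (Fintype.card α + 1 - w - #A : ℤ) else 0) := by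
  obtain ⟨v, rfl⟩ : ∃ v, w = v + 1 := ⟨w - 1, by omega⟩
  -- `v + 1 + 0` matches the shape `j + l` of `card_filter_powersetCard_card_inter_eq`
  have hsplit : {s ∈ Aᶜ.powersetCard (v + 1) | v + 1 ≤ #(c ∩ s) + 1} =
      {s ∈ Aᶜ.powersetCard (v + 1 + 0) | #(s ∩ c) = v + 1} ∪
        {s ∈ Aᶜ.powersetCard (v + 1) | #(s ∩ c) = v} := by
    rw [← filter_or]
    refine filter_congr fun s _ => ?_
    have : #(c ∩ s) ≤ v + 1 := hc ▸ card_le_card inter_subset_left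
    rw [inter_comm c s] at this ⊢
    omega
  rw [hsplit, card_union_of_disjoint (disjoint_filter.mpr fun _ _ h => by omega),
    card_filter_powersetCard_card_inter_eq Aᶜ c v 1,
    card_filter_powersetCard_card_inter_eq Aᶜ c (v + 1) 0,
    Nat.choose_zero_right, Nat.choose_one_right, mul_one]
  have hd : #(Aᶜ ∩ c) + #(c ∩ A) = v + 1 := by
    rw [inter_comm, ← sdiff_eq_inter_compl, card_sdiff_add_card_inter, hc]
  have he : #(Aᶜ \ c) + #(A ∪ c) = Fintype.card α := by
    rw [sdiff_eq_inter_compl, ← compl_union, card_compl, Nat.sub_add_cancel (card_le_univ _)]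
  have hu := card_union_add_card_inter A c
  rw [inter_comm A c, hc] at hu
  generalize #(Aᶜ ∩ c) = d at hd ⊢
  generalize #(Aᶜ \ c) = e at he ⊢
  rcases h : #(c ∩ A) with _ | _ | j <;> rw [h] at hd hu
  · obtain rfl : d = v + 1 := by omega
    have he' : (e : ℤ) = Fintype.card α - (v + 1) - #A := by omega
    simp [he']
  · obtain rfl : d = v := by omega
    simp only [Nat.choose_succ_self, Nat.choose_self, one_mul, zero_add, one_ne_zero, ↓reduceIte,
      Nat.cast_add, Nat.cast_one]
    omega
  · rw [Nat.choose_eq_zero_of_lt (by omega), Nat.choose_eq_zero_of_lt (by omega)]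
    simp

theorem perfect_double_count {w : ℕ} (hw : 1 ≤ w) {C : Finset (Finset α)} (hC : ∀ c ∈ C, #c = w)
    (hnear : ∀ s : Finset α, #s = w → #{c ∈ C | w ≤ #(c ∩ s) + 1} = 1) (A : Finset α) :
    (1 + w * (Fintype.card α - w - #A : ℤ)) * traceCount C A ∅ +
      (Fintype.card α + 1 - w - #A : ℤ) * #{c ∈ C | #(c ∩ A) = 1} =
      (Fintype.card α - #A).choose w := by
  have hcount : (Fintype.card α - #A).choose w =
      ∑ c ∈ C, #{s ∈ Aᶜ.powersetCard w | w ≤ #(c ∩ s) + 1} := by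
    calc (Fintype.card α - #A).choose w
        = ∑ s ∈ Aᶜ.powersetCard w, #{c ∈ C | w ≤ #(c ∩ s) + 1} := by
          rw [← card_compl, ← card_powersetCard, card_eq_sum_ones]
          exact sum_congr rfl fun s hs => (hnear s (mem_powersetCard.mp hs).2).symm
      _ = _ := (sum_card_bipartiteAbove_eq_sum_card_bipartiteBelow _).symm
  have hempty : traceCount C A ∅ = #{c ∈ C | #(c ∩ A) = 0} := by
    simp only [traceCount, card_eq_zero]
  rw [hcount, hempty]
  push_cast
  rw [sum_congr rfl fun c hc => card_near_disjoint_eq hw (hC c hc) A, sum_add_distrib,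
    ← sum_filter, ← sum_filter, sum_const, sum_const, nsmul_eq_mul, nsmul_eq_mul]
  ring

theorem traceCount_empty_eq_of_perfect {w m : ℕ} (hw : 1 ≤ w) {C : Finset (Finset α)}
    (hC : ∀ c ∈ C, #c = w)
    (hnear : ∀ s : Finset α, #s = w → #{c ∈ C | w ≤ #(c ∩ s) + 1} = 1)
    (hreg : IsTraceRegular C m)
    (hσ : sigmaOne (Fintype.card α) w (m + 1) ≠ 0)
    {A B : Finset α} (hA : #A = m + 1) (hB : #B = m + 1) :
    traceCount C A ∅ = traceCount C B ∅ := by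
  obtain ⟨τ, hτ⟩ := hreg
  have key : ∀ D : Finset α, #D = m + 1 →
      sigmaOne (Fintype.card α) w (m + 1) * traceCount C D ∅ =
      (Fintype.card α - (m + 1)).choose w -
        (Fintype.card α - w - m : ℤ) * (m + 1) * τ 0 := by
    intro D hD
    have hdc := perfect_double_count hw hC hnear D
    rw [card_filter_card_inter_eq_one hτ hD, hD] at hdc
    push_cast at hdc ⊢
    rw [sigmaOne]
    linear_combination hdc
  exact_mod_cast mul_left_cancel₀ hσ ((key A hA).trans (key B hB).symm)

theorem isTraceRegular_of_perfect {w : ℕ} (hw : 1 ≤ w) {C : Finset (Finset α)}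
    (hC : ∀ c ∈ C, #c = w)
    (hnear : ∀ s : Finset α, #s = w → #{c ∈ C | w ≤ #(c ∩ s) + 1} = 1) (k : ℕ)
    (hσ : ∀ m : ℤ, 1 ≤ m → m ≤ k → sigmaOne (Fintype.card α) w m ≠ 0) :
    IsTraceRegular C k := by
  induction k with
  | zero => exact isTraceRegular_zero C
  | succ m ih =>
    have hreg := ih fun M h1 h2 => hσ M h1 (by omega)
    have hσ' : sigmaOne (Fintype.card α) w (m + 1) ≠ 0 := by
      exact_mod_cast hσ (m + 1) (by omega) le_rfl
    exact hreg.succ fun A B hA hB => traceCount_empty_eq_of_perfect hw hC hnear hreg hσ' hA hB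

end

theorem card_near_eq_one_of_isOnePerfect {n w : ℕ} {C : Finset (Finset (Fin n))}
    (hC : IsOnePerfect n w C) {s : Finset (Fin n)} (hs : #s = w) :
    #{c ∈ C | w ≤ #(c ∩ s) + 1} = 1 := by
  obtain ⟨c, ⟨hcC, hcs⟩, huniq⟩ := hC.2 s hs
  rw [card_eq_one]
  refine ⟨c, eq_singleton_iff_unique_mem.mpr ⟨mem_filter.mpr ⟨hcC, by omega⟩, fun d hd => ?_⟩⟩
  obtain ⟨hdC, hds⟩ := mem_filter.mp hd
  exact huniq d ⟨hdC, by omega⟩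

theorem isKRegularCode_of_isTraceRegular {n k : ℕ} {C : Finset (Finset (Fin n))}
    (h : IsTraceRegular C k) : IsKRegularCode n k C := by
  classical
  obtain ⟨τ, hτ⟩ := h
  have hncard : ∀ (p : Finset (Fin n) → Prop) [DecidablePred p],
      {c ∈ (C : Set (Finset (Fin n))) | p c}.ncard = #{c ∈ C | p c} := by
    intro p _
    rw [← Set.ncard_coe_finset]
    congr 1
    ext c
    simp
  refine ⟨⟨fun i => k.choose i * τ i, fun A hA i _ => ?_⟩, fun A hA => ⟨τ, fun I hI => ?_⟩⟩
  · rw [hncard, ← sum_traceCount_powersetCard, sum_congr rfl fun I hI => ?_, sum_const,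
      card_powersetCard, hA, smul_eq_mul]
    rw [hτ A hA I (mem_powersetCard.mp hI).1, (mem_powersetCard.mp hI).2]
  · rw [hncard]
    exact hτ A hA I hI

theorem stmt_1_general (w a k : ℕ) (hw : 1 ≤ w)
    (C : Set (Finset (Fin (2 * w + a))))
    (hperf : IsOnePerfect (2 * w + a) w C)
    (hroot : ∀ m : ℤ, 1 ≤ m → m ≤ (k : ℤ) →
      m ^ 2 - (2 * (w : ℤ) + a + 1) * m + (w : ℤ) * (w + a) + 1 ≠ 0) :
    IsKRegularCode (2 * w + a) k C := by
  obtain ⟨C, rfl⟩ : ∃ C' : Finset (Finset (Fin (2 * w + a))), ↑C' = C :=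
    ⟨C.toFinite.toFinset, C.toFinite.coe_toFinset⟩
  refine isKRegularCode_of_isTraceRegular <| isTraceRegular_of_perfect hw hperf.1
    (fun s hs => card_near_eq_one_of_isOnePerfect hperf hs) k fun m h1 h2 => ?_
  convert hroot m h1 h2 using 1
  push_cast [sigmaOne, Fintype.card_fin]
  ring

/-- If the polynomial `σ₁(w,a,m) = m² - (2w+a+1)m + w(w+a) + 1` has no integer root
`m` with `1 ≤ m ≤ k`, then a nontrivial 1-perfect code in `J(2w+a, w)` is `k`-regular. -/
theorem stmt_1 (w a k : ℕ) (hw : 1 ≤ w) (hk : 0 < k)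
    (C : Set (Finset (Fin (2 * w + a))))
    (hperf : IsOnePerfect (2 * w + a) w C) (hnontriv : C.Nontrivial)
    (hroot : ∀ m : ℤ, 1 ≤ m → m ≤ (k : ℤ) →
      m ^ 2 - (2 * (w : ℤ) + a + 1) * m + (w : ℤ) * (w + a) + 1 ≠ 0) :
    IsKRegularCode (2 * w + a) k C :=
  stmt_1_general w a k hw C hperf hroot
end

section
/- Let C be a nontrivial 1-perfect code in the Johnson scheme J(2w+a, w) with w ≥ 1, a ≥ 0. If p is a prime and k a positive integer with p^k dividing 1 + w(w+a), then for every integer j with ⌈√w⌉ + 1 ≤ j ≤ w, the p-adic valuation of the binomial coefficient C(w+a+j, j) is at least k (equivalently, there are at least k carries when adding w+a and j in base p). -/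
open scoped BigOperators
open Finset

lemma card_supersets {n w : ℕ} (X : Finset (Fin n)) (hXw : X.card ≤ w) :
    ((Finset.univ.powersetCard w).filter (fun s => X ⊆ s)).card
      = (n - X.card).choose (w - X.card) := by
  classical
  have h1 : ((Finset.univ.powersetCard w).filter (fun s => X ⊆ s)).card
      = (Xᶜ.powersetCard (w - X.card)).card := by
    apply Finset.card_bij' (fun s _ => s \ X) (fun t _ => t ∪ X)
    · intro s hs
      simp only [mem_filter, Finset.mem_powersetCard_univ] at hs
      rw [Finset.mem_powersetCard]
      constructor
      · intro x hx
        simp only [Finset.mem_sdiff] at hx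
        simp [Finset.mem_compl, hx.2]
      · rw [Finset.card_sdiff_of_subset hs.2, hs.1]
    · intro t ht
      rw [Finset.mem_powersetCard] at ht
      have hdisj : Disjoint t X := by
        rw [Finset.disjoint_left]
        intro x hx hx'
        have := ht.1 hx
        simp [Finset.mem_compl] at this
        exact this hx'
      simp only [mem_filter, Finset.mem_powersetCard_univ]
      constructor
      · rw [Finset.card_union_of_disjoint hdisj, ht.2]
        omega
      · exact Finset.subset_union_right
    · intro s hs
      simp only [mem_filter, Finset.mem_powersetCard_univ] at hs
      exact Finset.sdiff_union_of_subset hs.2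
    · intro t ht
      rw [Finset.mem_powersetCard] at ht
      have hdisj : Disjoint t X := by
        rw [Finset.disjoint_left]
        intro x hx hx'
        have := ht.1 hx
        simp [Finset.mem_compl] at this
        exact this hx'
      rw [Finset.union_sdiff_distrib, Finset.sdiff_self, Finset.union_empty,
        Finset.sdiff_eq_self_of_disjoint hdisj]
  rw [h1, Finset.card_powersetCard, Finset.card_compl]
  simp

lemma count_exact {n w : ℕ} (c X : Finset (Fin n)) (hc : c.card = w) (hXc : X ⊆ c) :
    ((Finset.univ.powersetCard w).filter
        (fun s => X ⊆ s ∧ (c ∩ s).card + 1 = w)).card = (w - X.card) * (n - w) := by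
  classical
  have key : ((Finset.univ.powersetCard w).filter
        (fun s => X ⊆ s ∧ (c ∩ s).card + 1 = w)).card = ((c \ X) ×ˢ cᶜ).card := by
    symm
    apply Finset.card_bij (fun p _ => insert p.2 (c.erase p.1))
    · rintro ⟨x, y⟩ hp
      simp only [Finset.mem_product, Finset.mem_sdiff, Finset.mem_compl] at hp
      obtain ⟨⟨hxc, hxX⟩, hyc⟩ := hp
      have hyne : y ∉ c.erase x := fun h => hyc (Finset.mem_of_mem_erase h)
      have hcs : c ∩ insert y (c.erase x) = c.erase x := by
        ext z
        simp only [Finset.mem_inter, Finset.mem_insert, Finset.mem_erase]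
        constructor
        · rintro ⟨hzc, (rfl | hz)⟩
          · exact absurd hzc hyc
          · exact hz
        · rintro ⟨hzx, hzc⟩
          exact ⟨hzc, Or.inr ⟨hzx, hzc⟩⟩
      simp only [mem_filter, Finset.mem_powersetCard_univ]
      refine ⟨?_, ?_, ?_⟩
      · rw [Finset.card_insert_of_notMem hyne, Finset.card_erase_of_mem hxc, hc]
        have : 1 ≤ w := by
          have := Finset.card_pos.mpr ⟨x, hxc⟩
          omega
        omega
      · intro z hz
        have hzc := hXc hz
        have : z ≠ x := fun h => hxX (h ▸ hz)
        exact Finset.mem_insert_of_mem (Finset.mem_erase.mpr ⟨this, hzc⟩)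
      · rw [hcs, Finset.card_erase_of_mem hxc, hc]
        have : 1 ≤ w := by
          have := Finset.card_pos.mpr ⟨x, hxc⟩
          omega
        omega
    · rintro ⟨x, y⟩ hp ⟨x', y'⟩ hp' heq
      simp only [Finset.mem_product, Finset.mem_sdiff, Finset.mem_compl] at hp hp'
      obtain ⟨⟨hxc, hxX⟩, hyc⟩ := hp
      obtain ⟨⟨hxc', hxX'⟩, hyc'⟩ := hp'
      have hyy : y = y' := by
        have : y' ∈ insert y (c.erase x) := by
          rw [heq]; exact Finset.mem_insert_self _ _
        rcases Finset.mem_insert.mp this with h | h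
        · exact h.symm
        · exact absurd (Finset.mem_of_mem_erase h) hyc'
      subst hyy
      have hyne : y ∉ c.erase x := fun h => hyc (Finset.mem_of_mem_erase h)
      have hyne' : y ∉ c.erase x' := fun h => hyc (Finset.mem_of_mem_erase h)
      have herase : c.erase x = c.erase x' := by
        have h1 := Finset.erase_insert hyne
        have h2 := Finset.erase_insert hyne'
        rw [← h1, ← h2, heq]
      have : x = x' := by
        by_contra hne
        have : x' ∈ c.erase x := Finset.mem_erase.mpr ⟨fun h => hne h.symm, hxc'⟩
        rw [herase] at this
        exact (Finset.mem_erase.mp this).1 rfl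
      simp [this]
    · intro s hs
      simp only [mem_filter, Finset.mem_powersetCard_univ] at hs
      obtain ⟨hsw, hXs, hcs⟩ := hs
      have hcsub : c ∩ s ⊆ c := Finset.inter_subset_left
      have h1 : (c \ s).card = 1 := by
        have := Finset.card_sdiff_add_card_inter c s
        omega
      have h2 : (s \ c).card = 1 := by
        have := Finset.card_sdiff_add_card_inter s c
        rw [Finset.inter_comm] at this
        omega
      obtain ⟨x, hx⟩ := Finset.card_eq_one.mp h1
      obtain ⟨y, hy⟩ := Finset.card_eq_one.mp h2
      have hxc : x ∈ c ∧ x ∉ s := by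
        have : x ∈ c \ s := hx ▸ Finset.mem_singleton_self x
        exact Finset.mem_sdiff.mp this
      have hyc : y ∈ s ∧ y ∉ c := by
        have : y ∈ s \ c := hy ▸ Finset.mem_singleton_self y
        exact Finset.mem_sdiff.mp this
      refine ⟨⟨x, y⟩, ?_, ?_⟩
      · simp only [Finset.mem_product, Finset.mem_sdiff, Finset.mem_compl]
        exact ⟨⟨hxc.1, fun h => hxc.2 (hXs h)⟩, hyc.2⟩
      · ext z
        simp only [Finset.mem_insert, Finset.mem_erase]
        constructor
        · rintro (rfl | ⟨hzx, hzc⟩)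
          · exact hyc.1
          · by_contra hzs
            have : z ∈ c \ s := Finset.mem_sdiff.mpr ⟨hzc, hzs⟩
            rw [hx] at this
            exact hzx (Finset.mem_singleton.mp this)
        · intro hzs
          by_cases hzc : z ∈ c
          · right
            refine ⟨fun h => hxc.2 (h ▸ hzs), hzc⟩
          · left
            have : z ∈ s \ c := Finset.mem_sdiff.mpr ⟨hzs, hzc⟩
            rw [hy] at this
            exact Finset.mem_singleton.mp this
  rw [key, Finset.card_product, Finset.card_sdiff_of_subset hXc, hc, Finset.card_compl, hc]
  simp

lemma count_missing {n w : ℕ} (c X : Finset (Fin n)) (hc : c.card = w)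
    (hX : (c ∩ X).card + 1 = X.card) :
    ((Finset.univ.powersetCard w).filter
        (fun s => X ⊆ s ∧ w ≤ (c ∩ s).card + 1)).card = w + 1 - X.card := by
  classical
  have hXc1 : (X \ c).card = 1 := by
    have h1 := Finset.card_sdiff_add_card_inter X c
    rw [Finset.inter_comm] at h1
    omega
  obtain ⟨y0, hy0⟩ := Finset.card_eq_one.mp hXc1
  have hy0X : y0 ∈ X ∧ y0 ∉ c := by
    have : y0 ∈ X \ c := hy0 ▸ Finset.mem_singleton_self y0
    exact Finset.mem_sdiff.mp this
  have key : ((Finset.univ.powersetCard w).filter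
        (fun s => X ⊆ s ∧ w ≤ (c ∩ s).card + 1)).card = (c \ X).card := by
    symm
    apply Finset.card_bij (fun x _ => insert y0 (c.erase x))
    · rintro x hx
      simp only [Finset.mem_sdiff] at hx
      obtain ⟨hxc, hxX⟩ := hx
      have hw1 : 1 ≤ w := by
        have := Finset.card_pos.mpr ⟨x, hxc⟩
        omega
      have hyne : y0 ∉ c.erase x := fun h => hy0X.2 (Finset.mem_of_mem_erase h)
      have hcs : c ∩ insert y0 (c.erase x) = c.erase x := by
        ext z
        simp only [Finset.mem_inter, Finset.mem_insert, Finset.mem_erase]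
        constructor
        · rintro ⟨hzc, (rfl | hz)⟩
          · exact absurd hzc hy0X.2
          · exact hz
        · rintro ⟨hzx, hzc⟩
          exact ⟨hzc, Or.inr ⟨hzx, hzc⟩⟩
      simp only [mem_filter, Finset.mem_powersetCard_univ]
      refine ⟨?_, ?_, ?_⟩
      · rw [Finset.card_insert_of_notMem hyne, Finset.card_erase_of_mem hxc, hc]
        omega
      · intro z hz
        by_cases hzc : z ∈ c
        · have : z ≠ x := fun h => hxX (h ▸ hz)
          exact Finset.mem_insert_of_mem (Finset.mem_erase.mpr ⟨this, hzc⟩)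
        · have : z ∈ X \ c := Finset.mem_sdiff.mpr ⟨hz, hzc⟩
          rw [hy0] at this
          exact Finset.mem_insert.mpr (Or.inl (Finset.mem_singleton.mp this))
      · rw [hcs, Finset.card_erase_of_mem hxc, hc]
        omega
    · rintro x hx x' hx' heq
      simp only [Finset.mem_sdiff] at hx hx'
      have hyne : y0 ∉ c.erase x := fun h => hy0X.2 (Finset.mem_of_mem_erase h)
      have hyne' : y0 ∉ c.erase x' := fun h => hy0X.2 (Finset.mem_of_mem_erase h)
      have herase : c.erase x = c.erase x' := by
        have h1 := Finset.erase_insert hyne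
        have h2 := Finset.erase_insert hyne'
        rw [← h1, ← h2, heq]
      by_contra hne
      have : x' ∈ c.erase x := Finset.mem_erase.mpr ⟨fun h => hne h.symm, hx'.1⟩
      rw [herase] at this
      exact (Finset.mem_erase.mp this).1 rfl
    · intro s hs
      simp only [mem_filter, Finset.mem_powersetCard_univ] at hs
      obtain ⟨hsw, hXs, hcs⟩ := hs
      have hy0s : y0 ∈ s := hXs hy0X.1
      have hcsle : (c ∩ s).card + 1 ≤ w := by
        have hsub : c ∩ s ⊆ s.erase y0 := by
          intro z hz
          have := Finset.mem_inter.mp hz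
          exact Finset.mem_erase.mpr ⟨fun h => hy0X.2 (h ▸ this.1), this.2⟩
        have := Finset.card_le_card hsub
        rw [Finset.card_erase_of_mem hy0s, hsw] at this
        have hw1 : 1 ≤ w := by
          have := Finset.card_pos.mpr ⟨y0, hy0s⟩
          omega
        omega
      have hcseq : (c ∩ s).card + 1 = w := by omega
      have h1 : (c \ s).card = 1 := by
        have := Finset.card_sdiff_add_card_inter c s
        omega
      obtain ⟨x, hx⟩ := Finset.card_eq_one.mp h1
      have hxc : x ∈ c ∧ x ∉ s := by
        have : x ∈ c \ s := hx ▸ Finset.mem_singleton_self x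
        exact Finset.mem_sdiff.mp this
      refine ⟨x, ?_, ?_⟩
      · exact Finset.mem_sdiff.mpr ⟨hxc.1, fun h => hxc.2 (hXs h)⟩
      · ext z
        simp only [Finset.mem_insert, Finset.mem_erase]
        constructor
        · rintro (rfl | ⟨hzx, hzc⟩)
          · exact hy0s
          · by_contra hzs
            have : z ∈ c \ s := Finset.mem_sdiff.mpr ⟨hzc, hzs⟩
            rw [hx] at this
            exact hzx (Finset.mem_singleton.mp this)
        · intro hzs
          by_cases hzc : z ∈ c
          · right
            exact ⟨fun h => hxc.2 (h ▸ hzs), hzc⟩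
          · left
            have h2 : (s \ c).card = 1 := by
              have := Finset.card_sdiff_add_card_inter s c
              rw [Finset.inter_comm] at this
              omega
            obtain ⟨y, hy⟩ := Finset.card_eq_one.mp h2
            have hz' : z ∈ s \ c := Finset.mem_sdiff.mpr ⟨hzs, hzc⟩
            have hy0' : y0 ∈ s \ c := Finset.mem_sdiff.mpr ⟨hy0s, hy0X.2⟩
            rw [hy] at hz' hy0'
            rw [Finset.mem_singleton.mp hz', ← Finset.mem_singleton.mp hy0']
  rw [key]
  have := Finset.card_sdiff_add_card_inter c X
  omega

lemma count_sub {n w : ℕ} (c X : Finset (Fin n)) (hc : c.card = w) (hXc : X ⊆ c) :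
    ((Finset.univ.powersetCard w).filter
        (fun s => X ⊆ s ∧ w ≤ (c ∩ s).card + 1)).card = 1 + (w - X.card) * (n - w) := by
  classical
  have hcc : c ∩ c = c := Finset.inter_self c
  have hsplit : (Finset.univ.powersetCard w).filter (fun s => X ⊆ s ∧ w ≤ (c ∩ s).card + 1)
      = insert c ((Finset.univ.powersetCard w).filter
          (fun s => X ⊆ s ∧ (c ∩ s).card + 1 = w)) := by
    ext s
    simp only [Finset.mem_insert, mem_filter, Finset.mem_powersetCard_univ]
    constructor
    · rintro ⟨hsw, hXs, hle⟩
      have hsub : c ∩ s ⊆ c := Finset.inter_subset_left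
      have hle2 : (c ∩ s).card ≤ w := hc ▸ Finset.card_le_card hsub
      by_cases heq : (c ∩ s).card = w
      · left
        have h1 : c ∩ s = c := Finset.eq_of_subset_of_card_le hsub (by omega)
        have hcs : c ⊆ s := fun z hz => (Finset.mem_inter.mp (h1 ▸ hz)).2
        exact (Finset.eq_of_subset_of_card_le hcs (by omega)).symm
      · right
        exact ⟨hsw, hXs, by omega⟩
    · rintro (rfl | ⟨hsw, hXs, heq⟩)
      · exact ⟨hc, hXc, by rw [hcc, hc]; omega⟩
      · exact ⟨hsw, hXs, by omega⟩
  have hnotmem : c ∉ (Finset.univ.powersetCard w).filter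
      (fun s => X ⊆ s ∧ (c ∩ s).card + 1 = w) := by
    simp only [mem_filter, Finset.mem_powersetCard_univ, hcc, hc]
    rintro ⟨-, -, h⟩
    omega
  rw [hsplit, Finset.card_insert_of_notMem hnotmem, count_exact c X hc hXc]
  omega

lemma count_zero {n w : ℕ} (c X : Finset (Fin n)) (hc : c.card = w)
    (h2 : (c ∩ X).card + 2 ≤ X.card) :
    ((Finset.univ.powersetCard w).filter
        (fun s => X ⊆ s ∧ w ≤ (c ∩ s).card + 1)).card = 0 := by
  classical
  rw [Finset.card_eq_zero, Finset.filter_eq_empty_iff]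
  rintro s hs ⟨hXs, hle⟩
  rw [Finset.mem_powersetCard_univ] at hs
  have hXsub : X \ c ⊆ s \ c := fun z hz => by
    rw [Finset.mem_sdiff] at hz ⊢
    exact ⟨hXs hz.1, hz.2⟩
  have h3 := Finset.card_le_card hXsub
  have h4 := Finset.card_sdiff_add_card_inter X c
  have h5 := Finset.card_sdiff_add_card_inter s c
  rw [Finset.inter_comm X c] at h4
  rw [Finset.inter_comm s c] at h5
  omega

lemma Rrel {n w : ℕ} (Cs : Finset (Finset (Fin n))) (hcard : ∀ c ∈ Cs, c.card = w)
    (hu : ∀ s : Finset (Fin n), s.card = w → ∃! c, c ∈ Cs ∧ w ≤ (c ∩ s).card + 1)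
    (X : Finset (Fin n)) (hXw : X.card ≤ w) :
    (n - X.card).choose (w - X.card)
      = (1 + (w - X.card) * (n - w)) * (Cs.filter (fun c => X ⊆ c)).card
        + (w + 1 - X.card) * (Cs.filter (fun c => (c ∩ X).card + 1 = X.card)).card := by
  classical
  set S := (Finset.univ.powersetCard w).filter (fun s => X ⊆ s) with hS
  have hL : S.card = (n - X.card).choose (w - X.card) := card_supersets X hXw
  -- the classifying function
  have hpick : ∀ s : Finset (Fin n), s.card = w →
      ∃ c, (c ∈ Cs ∧ w ≤ (c ∩ s).card + 1) ∧
        ∀ c', c' ∈ Cs → w ≤ (c' ∩ s).card + 1 → c' = c := by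
    intro s hs
    obtain ⟨c, hc1, hc2⟩ := hu s hs
    exact ⟨c, hc1, fun c' h1 h2 => hc2 c' ⟨h1, h2⟩⟩
  set F : Finset (Fin n) → Finset (Fin n) :=
    fun s => if h : s.card = w then (hpick s h).choose else ∅ with hF
  have hFmem : ∀ s ∈ S, F s ∈ Cs := by
    intro s hs
    simp only [hS, mem_filter, Finset.mem_powersetCard_univ] at hs
    rw [hF]
    simp only [hs.1, dif_pos]
    exact (hpick s hs.1).choose_spec.1.1
  have hfib := Finset.card_eq_sum_card_fiberwise hFmem
  have hfibeq : ∀ c ∈ Cs, (S.filter (fun s => F s = c))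
      = (Finset.univ.powersetCard w).filter (fun s => X ⊆ s ∧ w ≤ (c ∩ s).card + 1) := by
    intro c hc
    ext s
    simp only [hS, Finset.filter_filter, mem_filter, Finset.mem_powersetCard_univ]
    constructor
    · rintro ⟨hsw, hXs, hFs⟩
      have hspec := (hpick s hsw).choose_spec
      rw [hF] at hFs
      simp only [hsw, dif_pos] at hFs
      rw [← hFs]
      exact ⟨hsw, hXs, hspec.1.2⟩
    · rintro ⟨hsw, hXs, hnear⟩
      refine ⟨hsw, hXs, ?_⟩
      have hspec := (hpick s hsw).choose_spec
      rw [hF]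
      simp only [hsw, dif_pos]
      exact (hspec.2 c hc hnear).symm
  have hsum : S.card = ∑ c ∈ Cs, ((Finset.univ.powersetCard w).filter
      (fun s => X ⊆ s ∧ w ≤ (c ∩ s).card + 1)).card := by
    rw [hfib]
    exact Finset.sum_congr rfl (fun c hc => by rw [hfibeq c hc])
  -- evaluate each term
  have hval : ∀ c ∈ Cs, ((Finset.univ.powersetCard w).filter
      (fun s => X ⊆ s ∧ w ≤ (c ∩ s).card + 1)).card
      = if X ⊆ c then 1 + (w - X.card) * (n - w)
        else if (c ∩ X).card + 1 = X.card then w + 1 - X.card else 0 := by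
    intro c hc
    by_cases h1 : X ⊆ c
    · rw [if_pos h1, count_sub c X (hcard c hc) h1]
    · rw [if_neg h1]
      by_cases h2 : (c ∩ X).card + 1 = X.card
      · rw [if_pos h2, count_missing c X (hcard c hc) h2]
      · rw [if_neg h2]
        have hlt : (c ∩ X).card < X.card := by
          have hsub : c ∩ X ⊆ X := Finset.inter_subset_right
          have hle := Finset.card_le_card hsub
          rcases Nat.lt_or_ge (c ∩ X).card X.card with h | h
          · exact h
          · have heq : c ∩ X = X := Finset.eq_of_subset_of_card_le hsub h
            have : X ⊆ c := by rw [← heq]; exact Finset.inter_subset_left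
            exact absurd this h1
        exact count_zero c X (hcard c hc) (by omega)
  rw [← hL, hsum]
  rw [Finset.sum_congr rfl hval]
  rw [Finset.sum_ite, Finset.sum_const, Finset.sum_ite, Finset.sum_const, Finset.sum_const_zero]
  have hfeq : Finset.filter (fun c => (c ∩ X).card + 1 = X.card)
      (Finset.filter (fun c => ¬ X ⊆ c) Cs)
      = Finset.filter (fun c => (c ∩ X).card + 1 = X.card) Cs := by
    rw [Finset.filter_filter]
    apply Finset.filter_congr
    intro c hc
    constructor
    · rintro ⟨-, h⟩; exact h
    · intro h
      refine ⟨?_, h⟩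
      intro hsub
      rw [Finset.inter_eq_right.mpr hsub] at h
      omega
  rw [hfeq]
  rw [smul_eq_mul, smul_eq_mul, add_zero, mul_comm, mul_comm _ (w + 1 - X.card)]

lemma sum_erase_count {n : ℕ} (Cs : Finset (Finset (Fin n))) (X : Finset (Fin n)) :
    ∑ x ∈ X, (Cs.filter (fun c => X.erase x ⊆ c)).card
      = X.card * (Cs.filter (fun c => X ⊆ c)).card
        + (Cs.filter (fun c => (c ∩ X).card + 1 = X.card)).card := by
  classical
  have hrw : ∀ x, (Cs.filter (fun c => X.erase x ⊆ c)).card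
      = ∑ c ∈ Cs, if X.erase x ⊆ c then 1 else 0 := by
    intro x
    rw [Finset.card_filter]
  simp_rw [hrw]
  rw [Finset.sum_comm]
  have hper : ∀ c ∈ Cs, (∑ x ∈ X, if X.erase x ⊆ c then 1 else 0)
      = (if X ⊆ c then X.card else 0)
        + (if (c ∩ X).card + 1 = X.card then 1 else 0) := by
    intro c _
    by_cases h1 : X ⊆ c
    · rw [if_pos h1]
      have : (c ∩ X).card = X.card := by rw [Finset.inter_eq_right.mpr h1]
      rw [if_neg (by omega)]
      have : ∀ x ∈ X, (if X.erase x ⊆ c then 1 else 0) = 1 := by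
        intro x _
        have hss : X.erase x ⊆ c := fun z hz => h1 (Finset.mem_of_mem_erase hz)
        rw [if_pos hss]
      rw [Finset.sum_congr rfl this, Finset.sum_const, smul_eq_mul, mul_one, add_zero]
    · rw [if_neg h1, zero_add]
      by_cases h2 : (c ∩ X).card + 1 = X.card
      · rw [if_pos h2]
        have hX1 : (X \ c).card = 1 := by
          have := Finset.card_sdiff_add_card_inter X c
          rw [Finset.inter_comm] at this
          omega
        obtain ⟨x0, hx0⟩ := Finset.card_eq_one.mp hX1
        have hx0m : x0 ∈ X ∧ x0 ∉ c := by
          have : x0 ∈ X \ c := hx0 ▸ Finset.mem_singleton_self x0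
          exact Finset.mem_sdiff.mp this
        have hiff : ∀ x ∈ X, (X.erase x ⊆ c ↔ x = x0) := by
          intro x hx
          constructor
          · intro hsub
            by_contra hne
            have : x0 ∈ X.erase x := Finset.mem_erase.mpr ⟨fun h => hne h.symm, hx0m.1⟩
            exact hx0m.2 (hsub this)
          · rintro rfl
            intro z hz
            rw [Finset.mem_erase] at hz
            by_contra hzc
            have : z ∈ X \ c := Finset.mem_sdiff.mpr ⟨hz.2, hzc⟩
            rw [hx0] at this
            exact hz.1 (Finset.mem_singleton.mp this)
        have : ∀ x ∈ X, (if X.erase x ⊆ c then (1:ℕ) else 0) = if x = x0 then 1 else 0 := by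
          intro x hx
          exact if_congr (hiff x hx) rfl rfl
        rw [Finset.sum_congr rfl this, Finset.sum_ite_eq' X x0 (fun _ => (1:ℕ)),
          if_pos hx0m.1]
      · rw [if_neg h2]
        have hX2 : 2 ≤ (X \ c).card := by
          have h3 := Finset.card_sdiff_add_card_inter X c
          rw [Finset.inter_comm] at h3
          have h4 : ¬ X ⊆ c := h1
          have h5 : (X \ c).card ≠ 0 := by
            intro h
            rw [Finset.card_eq_zero, Finset.sdiff_eq_empty_iff_subset] at h
            exact h4 h
          have h6 : (c ∩ X).card ≤ X.card := by
            rw [Finset.inter_comm]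
            exact Finset.card_le_card Finset.inter_subset_left
          omega
        have : ∀ x ∈ X, (if X.erase x ⊆ c then (1:ℕ) else 0) = 0 := by
          intro x hx
          rw [if_neg]
          intro hsub
          have hsub2 : X \ c ⊆ {x} := by
            intro z hz
            rw [Finset.mem_sdiff] at hz
            rw [Finset.mem_singleton]
            by_contra hne
            exact hz.2 (hsub (Finset.mem_erase.mpr ⟨hne, hz.1⟩))
          have := Finset.card_le_card hsub2
          rw [Finset.card_singleton] at this
          omega
        rw [Finset.sum_congr rfl this, Finset.sum_const_zero]
  rw [Finset.sum_congr rfl hper, Finset.sum_add_distrib]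
  congr 1
  · rw [Finset.sum_ite, Finset.sum_const_zero, Finset.sum_const, add_zero, smul_eq_mul,
      mul_comm]
  · rw [← Finset.card_filter]

lemma chain {n w : ℕ} (Cs : Finset (Finset (Fin n))) (hcard : ∀ c ∈ Cs, c.card = w)
    (hu : ∀ s : Finset (Fin n), s.card = w → ∃! c, c ∈ Cs ∧ w ≤ (c ∩ s).card + 1)
    (hwn : w ≤ n) :
    ∀ i : ℕ, i ≤ w →
      (∀ t, 1 ≤ t → t ≤ i → 1 + (w - t) * (n - w) ≠ t * (w + 1 - t)) →
      ∀ X : Finset (Fin n), X.card = i →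
        ((1 + w * (n - w) : ℕ) : ℤ) * ((Cs.filter (fun c => X ⊆ c)).card : ℤ)
          = (((n - i).choose (w - i) : ℕ) : ℤ) := by
  intro i
  induction i with
  | zero =>
    intro _ _ X hX
    rw [Finset.card_eq_zero] at hX
    subst hX
    have hR := Rrel Cs hcard hu (∅ : Finset (Fin n)) (by simp)
    have hg : (Cs.filter (fun c => (c ∩ (∅ : Finset (Fin n))).card + 1
        = (∅ : Finset (Fin n)).card)) = ∅ := by
      apply Finset.filter_false_of_mem
      intro c _
      simp
    rw [hg] at hR
    simp only [Finset.card_empty, Nat.sub_zero, Finset.card_empty, mul_zero, add_zero] at hR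
    exact_mod_cast hR.symm
  | succ i ih =>
    intro hiw hγ X hX
    obtain ⟨u, hu'⟩ : ∃ u, w = (i + 1) + u := ⟨w - (i+1), by omega⟩
    obtain ⟨v, hv'⟩ : ∃ v, n = w + v := ⟨n - w, by omega⟩
    -- naturals cleanup
    have e1 : w - (i+1) = u := by omega
    have e2 : n - w = v := by omega
    have e3 : w + 1 - (i+1) = u + 1 := by omega
    have e4 : n - (i+1) = u + v := by omega
    have e5 : w - i = u + 1 := by omega
    have e6 : n - i = u + v + 1 := by omega
    -- Rrel at X
    have hR := Rrel Cs hcard hu X (by omega)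
    rw [hX, e1, e2, e3, e4] at hR
    -- sum_erase at X
    have hS := sum_erase_count Cs X
    rw [hX] at hS
    -- notation
    set f := (Cs.filter (fun c => X ⊆ c)).card with hf
    set g := (Cs.filter (fun c => (c ∩ X).card + 1 = i + 1)).card with hg
    set Sg := ∑ x ∈ X, (Cs.filter (fun c => X.erase x ⊆ c)).card with hSg
    -- ih applied to each erase
    have hihx : ∀ x ∈ X, ((1 + w * (n - w) : ℕ) : ℤ)
        * (((Cs.filter (fun c => X.erase x ⊆ c)).card : ℕ) : ℤ)
        = (((u + v + 1).choose (u + 1) : ℕ) : ℤ) := by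
      intro x hx
      have := ih (by omega) (fun t h1 h2 => hγ t h1 (by omega)) (X.erase x)
        (by rw [Finset.card_erase_of_mem hx, hX]; omega)
      rw [e5, e6] at this
      exact this
    have h3 : ((1 + w * (n - w) : ℕ) : ℤ) * (Sg : ℤ)
        = ((i : ℤ) + 1) * (((u + v + 1).choose (u + 1) : ℕ) : ℤ) := by
      have hc : (Sg : ℤ) = ∑ x ∈ X, (((Cs.filter (fun c => X.erase x ⊆ c)).card : ℕ) : ℤ) := by
        rw [hSg]
        push_cast
        rfl
      rw [hc, Finset.mul_sum, Finset.sum_congr rfl hihx, Finset.sum_const, hX]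
      push_cast
      ring
    -- binomial identity
    have hbin : (u + v + 1) * ((u + v).choose u) = ((u + v + 1).choose (u + 1)) * (u + 1) := by
      have := Nat.add_one_mul_choose_eq (u + v) u
      simpa using this
    -- gamma nonzero
    have hγ1 := hγ (i+1) (by omega) (le_refl _)
    rw [e1, e2, e3] at hγ1
    -- move to ℤ
    have hRz : (((u + v).choose u : ℕ) : ℤ)
        = (1 + (u : ℤ) * v) * f + ((u : ℤ) + 1) * g := by
      exact_mod_cast hR
    have hSz : (Sg : ℤ) = ((i : ℤ) + 1) * f + g := by exact_mod_cast hS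
    have hbz : ((u : ℤ) + v + 1) * (((u + v).choose u : ℕ) : ℤ)
        = (((u + v + 1).choose (u + 1) : ℕ) : ℤ) * ((u : ℤ) + 1) := by
      exact_mod_cast hbin
    have hγz : (1 + (u : ℤ) * v) ≠ ((i : ℤ) + 1) * ((u : ℤ) + 1) := by
      intro h
      apply hγ1
      have : ((1 + u * v : ℕ) : ℤ) = (((i+1) * (u+1) : ℕ) : ℤ) := by push_cast; linarith
      exact_mod_cast this
    set Phi : ℤ := ((1 + w * (n - w) : ℕ) : ℤ) with hPhi
    have hPhiv : Phi = 1 + ((i : ℤ) + 1 + u) * v := by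
      rw [hPhi, e2, hu']
      push_cast
      ring
    set B1 : ℤ := (((u + v).choose u : ℕ) : ℤ)
    set B0 : ℤ := (((u + v + 1).choose (u + 1) : ℕ) : ℤ)
    -- goal: Phi * f = B1
    have key : ((1 + (u : ℤ) * v) - ((i : ℤ) + 1) * ((u : ℤ) + 1)) * (Phi * (f : ℤ) - B1)
        = 0 := by
      have hq : Phi * (Sg : ℤ) = ((i : ℤ) + 1) * B0 := h3
      rw [hPhiv]
      rw [hPhiv] at hq
      linear_combination (-(1 + ((i : ℤ) + 1 + u) * v)) * hRz
        + ((u : ℤ) + 1) * (1 + ((i : ℤ) + 1 + u) * v) * hSz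
        - ((u : ℤ) + 1) * hq + ((i : ℤ) + 1) * hbz
    rcases mul_eq_zero.mp key with h | h
    · exact absurd (by linarith [sub_eq_zero.mp h] : (1 + (u : ℤ) * v)
        = ((i : ℤ) + 1) * ((u : ℤ) + 1)) hγz
    · have := sub_eq_zero.mp h
      rw [e4, e1]
      exact this

/-- For a nontrivial 1-perfect code in `J(2w+a, w)`: if `p^k ∣ 1 + w(w+a)` for a prime
`p` and `k ≥ 1`, then for every `j` with `⌈√w⌉ + 1 ≤ j ≤ w`, the `p`-adic valuation of
`C(w+a+j, j)` is at least `k`. -/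
theorem stmt_5 (w a : ℕ) (hw : 1 ≤ w) (C : Set (Finset (Fin (2 * w + a))))
    (hperf : IsOnePerfect (2 * w + a) w C) (hnontriv : C.Nontrivial)
    (p k : ℕ) (hp : p.Prime) (hk : 1 ≤ k) (hdvd : p ^ k ∣ 1 + w * (w + a)) :
    ∀ j : ℕ, ⌈Real.sqrt w⌉₊ + 1 ≤ j → j ≤ w →
      k ≤ (Nat.choose (w + a + j) j).factorization p := by
  classical
  intro j hj1 hj2
  have hn : 2 * w + a = 2 * w + a := rfl
  obtain ⟨hjc, hup⟩ := hperf
  have hfin : C.Finite := Set.toFinite C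
  set Cs : Finset (Finset (Fin (2 * w + a))) := hfin.toFinset with hCs
  have hcard : ∀ c ∈ Cs, c.card = w := fun c hc => hjc c (hfin.mem_toFinset.mp hc)
  have hu : ∀ s : Finset (Fin (2 * w + a)), s.card = w → ∃! c, c ∈ Cs ∧ w ≤ (c ∩ s).card + 1 := by
    intro s hs
    obtain ⟨c, ⟨hc1, hc2⟩, hc3⟩ := hup s hs
    refine ⟨c, ⟨hfin.mem_toFinset.mpr hc1, by omega⟩, ?_⟩
    rintro c' ⟨h1', h2'⟩
    exact hc3 c' ⟨hfin.mem_toFinset.mp h1', by omega⟩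
  -- the ceil sqrt bound
  have hsq : w ≤ (⌈Real.sqrt w⌉₊) ^ 2 := by
    have h1 : Real.sqrt w ≤ ((⌈Real.sqrt w⌉₊ : ℕ) : ℝ) := Nat.le_ceil _
    have h2 : (w : ℝ) ≤ (((⌈Real.sqrt w⌉₊ : ℕ) : ℝ)) ^ 2 := by
      have h3 : Real.sqrt w ^ 2 ≤ (((⌈Real.sqrt w⌉₊ : ℕ) : ℝ)) ^ 2 :=
        pow_le_pow_left₀ (Real.sqrt_nonneg _) h1 2
      rwa [Real.sq_sqrt (by positivity : (0:ℝ) ≤ (w:ℝ))] at h3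
    exact_mod_cast h2
  set i := w - j with hi
  have hγ : ∀ t, 1 ≤ t → t ≤ i → 1 + (w - t) * (2 * w + a - w) ≠ t * (w + 1 - t) := by
    intro t ht1 ht2
    set s := w - t with hs
    have hts : t + s = w := by omega
    have hsj : j ≤ s := by omega
    have hm : ⌈Real.sqrt w⌉₊ + 1 ≤ s := by omega
    have hs2 : w + 1 ≤ s * s := by
      have : (⌈Real.sqrt w⌉₊ + 1) ^ 2 ≤ s ^ 2 := Nat.pow_le_pow_left hm 2
      have h4 : (⌈Real.sqrt w⌉₊) ^ 2 + 1 ≤ (⌈Real.sqrt w⌉₊ + 1) ^ 2 := by ring_nf; omega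
      have := Nat.pow_le_pow_left hm 2
      calc w + 1 ≤ (⌈Real.sqrt w⌉₊) ^ 2 + 1 := by omega
        _ ≤ (⌈Real.sqrt w⌉₊ + 1) ^ 2 := h4
        _ ≤ s ^ 2 := Nat.pow_le_pow_left hm 2
        _ = s * s := sq s
    have hnw : 2 * w + a - w = w + a := by omega
    rw [hnw]
    have hw1t : w + 1 - t = s + 1 := by omega
    rw [hw1t]
    intro heq
    -- 1 + s*(w+a) = t*(s+1), with t + s = w, s*s ≥ w+1 : contradiction
    nlinarith [heq, hts, hs2, Nat.zero_le a]
  -- apply chain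
  obtain ⟨X, -, hXcard⟩ := Finset.exists_subset_card_eq
    (show i ≤ (Finset.univ : Finset (Fin (2 * w + a))).card by
      rw [Finset.card_univ, Fintype.card_fin]; omega)
  have hkey := chain Cs hcard hu (by omega) i (by omega) hγ X hXcard
  have hrw1 : 2 * w + a - i = w + a + j := by omega
  have hrw2 : w - i = j := by omega
  rw [hrw1, hrw2] at hkey
  have hdvd2 : (1 + w * (2 * w + a - w)) ∣ (w + a + j).choose j := by
    have : ((1 + w * (2 * w + a - w) : ℕ) : ℤ) ∣ (((w + a + j).choose j : ℕ) : ℤ) :=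
      ⟨_, hkey.symm⟩
    exact_mod_cast this
  have hnw : 2 * w + a - w = w + a := by omega
  rw [hnw] at hdvd2
  have hdvd3 : p ^ k ∣ (w + a + j).choose j := dvd_trans hdvd hdvd2
  have hne : (w + a + j).choose j ≠ 0 :=
    Nat.choose_pos (by omega) |>.ne'
  exact (hp.pow_dvd_iff_le_factorization hne).mp hdvd3
end

section
/- Let C be a nontrivial 1-perfect code in the Johnson scheme J(2w+a, w) with w ≥ 1, a ≥ 0, and let p_1, …, p_r be the distinct prime divisors of 1 + w(w+a). Then 0 < Σ_{i=1}^r log_{w+a}(p_i) − (1 + log_{w+a}(w)) ≤ 1/(w(w+a)). -/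
open scoped BigOperators

/-!
A 1-perfect code in `J(n, w)` partitions the `w`-sets into balls of size `Φ = 1 + w (n - w)`.
Sorting the `w`-supersets of an `i`-set by their codeword, and double counting the codewords
through the `i`-subsets of an `(i + 1)`-set, shows by induction on `i` that every `i`-set lies in
exactly `C(n - i, w - i) / Φ` codewords as long as `Φ ≠ (i + 1) (n - i)`. At `i = w` this count
would be `1 / Φ`, so the induction stops: Lloyd's condition `Φ = m (n + 1 - m)` holds for some
`m ≤ w`, and `Φ ∣ C(n - i, w - i)` for all `i < m`. Writing `w = m + α` and `n - w = m + γ`, the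
condition forces `m = α γ + 1` and `Φ = M K` with `M = α γ + 1`, `K = n + 1 - m`. Pascal's rule
turns the divisibilities into `Φ ∣ C(K, d)` for the whole window `α < d < K - α`, and Kummer's
theorem on carries shows that no `p²` can divide all of these together with `M K`. So `Φ` is
squarefree, `∑ log pᵢ = log Φ = log (w (w + a)) + log (1 + 1 / (w (w + a)))`, and both bounds
follow from `0 < log (1 + x) ≤ x` and `log (w + a) > 1`.
-/

open Finset

namespace Johnson

variable {α : Type*} [DecidableEq α]

def numContaining (F : Finset (Finset α)) (T : Finset α) : ℕ := #{c ∈ F | T ⊆ c}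

def numMissingOne (F : Finset (Finset α)) (T : Finset α) : ℕ := #{c ∈ F | #(T \ c) = 1}

lemma sum_numContaining_powersetCard (F : Finset (Finset α)) {T : Finset α} {j : ℕ}
    (hT : #T = j + 1) :
    ∑ T' ∈ T.powersetCard j, numContaining F T' =
      numMissingOne F T + (j + 1) * numContaining F T := by
  have hswap : ∑ T' ∈ T.powersetCard j, numContaining F T' = ∑ c ∈ F, (#(T ∩ c)).choose j := by
    have h := sum_card_bipartiteAbove_eq_sum_card_bipartiteBelow (fun T' c : Finset α => T' ⊆ c)
      (s := T.powersetCard j) (t := F)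
    refine h.trans (sum_congr rfl fun c _ => ?_)
    rw [← card_powersetCard]
    congr 1
    ext T'
    simp only [mem_bipartiteBelow, mem_powersetCard, subset_inter_iff]
    tauto
  have hchoose : ∀ c ∈ F, (#(T ∩ c)).choose j =
      (if T ⊆ c then j + 1 else 0) + (if #(T \ c) = 1 then 1 else 0) := by
    intro c _
    have hsplit := card_inter_add_card_sdiff T c
    by_cases hTc : T ⊆ c
    · have : #(T \ c) = 0 := by simp [sdiff_eq_empty_iff_subset.mpr hTc]
      rw [show #(T ∩ c) = j + 1 by omega, Nat.choose_succ_self_right, if_pos hTc, if_neg (by omega)]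
    · have : #(T \ c) ≠ 0 := (card_pos.mpr (sdiff_nonempty.mpr hTc)).ne'
      rw [if_neg hTc, zero_add]
      split_ifs with hone
      · rw [show #(T ∩ c) = j by omega, Nat.choose_self]
      · exact Nat.choose_eq_zero_of_lt (by omega)
  rw [hswap, sum_congr rfl hchoose, sum_add_distrib, sum_ite, sum_ite, sum_const_zero,
    sum_const_zero, sum_const, sum_const, smul_eq_mul, smul_eq_mul, numContaining, numMissingOne]
  ring

variable [Fintype α]

def oneBall (w : ℕ) (c : Finset α) : Finset (Finset α) :=
  {s | #s = w ∧ w ≤ #(c ∩ s) + 1}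

@[simp]
lemma mem_oneBall {w : ℕ} {c s : Finset α} : s ∈ oneBall w c ↔ #s = w ∧ w ≤ #(c ∩ s) + 1 := by
  simp [oneBall]

lemma exchange_injOn (c : Finset α) :
    Set.InjOn (fun uv : α × α => insert uv.2 (c.erase uv.1)) ↑(c ×ˢ cᶜ) := by
  rintro ⟨u₁, v₁⟩ h₁ ⟨u₂, v₂⟩ h₂ h
  simp only [coe_product, Set.mem_prod, mem_coe, mem_compl] at h₁ h₂ h
  have hv : v₁ = v₂ := by
    have : v₁ ∈ insert v₂ (c.erase u₂) := h ▸ mem_insert_self _ _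
    grind
  have hu : u₁ = u₂ := by
    by_contra hne
    have : u₁ ∈ insert v₂ (c.erase u₂) := mem_insert_of_mem (mem_erase.mpr ⟨hne, h₁.1⟩)
    grind
  rw [hu, hv]

lemma mem_oneBall_iff {w : ℕ} {c s : Finset α} (hc : #c = w) :
    s ∈ oneBall w c ↔ s = c ∨ ∃ u ∈ c, ∃ v ∉ c, insert v (c.erase u) = s := by
  rw [mem_oneBall]
  constructor
  · rintro ⟨hs, hcs⟩
    by_cases hsub : c ⊆ s
    · exact .inl (eq_of_subset_of_card_le hsub (by omega)).symm
    obtain ⟨u, hu, hus⟩ := not_subset.mp hsub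
    have hinter : c ∩ s = c.erase u := by
      refine eq_of_subset_of_card_le (fun x hx => ?_) ?_
      · exact mem_erase.mpr ⟨fun h => hus (h ▸ (mem_inter.mp hx).2), (mem_inter.mp hx).1⟩
      · rw [card_erase_of_mem hu]; omega
    obtain ⟨v, hv, rfl⟩ : ∃ v ∉ c.erase u, insert v (c.erase u) = s := by
      refine exists_eq_insert_iff.mpr ⟨hinter ▸ inter_subset_right, ?_⟩
      rw [card_erase_of_mem hu]
      have := card_pos.mpr ⟨u, hu⟩
      omega
    refine .inr ⟨u, hu, v, fun hvc => ?_, rfl⟩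
    grind
  · rintro (rfl | ⟨u, hu, v, hv, rfl⟩)
    · simp [hc]
    · have hcard := card_erase_of_mem hu
      have hsub : c.erase u ⊆ c ∩ insert v (c.erase u) :=
        subset_inter (erase_subset u c) (subset_insert v _)
      have := card_le_card hsub
      have := card_pos.mpr ⟨u, hu⟩
      rw [card_insert_of_notMem (fun h => hv (mem_of_mem_erase h))]
      omega

lemma oneBall_eq_insert_image {w : ℕ} {c : Finset α} (hc : #c = w) :
    oneBall w c = insert c ((c ×ˢ cᶜ).image fun uv => insert uv.2 (c.erase uv.1)) := by
  ext s
  simp only [mem_oneBall_iff hc, mem_insert, mem_image, mem_product, mem_compl, Prod.exists]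
  grind

lemma filter_product_subset_insert_erase (c T : Finset α) :
    {uv ∈ c ×ˢ cᶜ | T ⊆ insert uv.2 (c.erase uv.1)} = (c \ T) ×ˢ {v ∈ cᶜ | T \ c ⊆ {v}} := by
  ext ⟨u, v⟩
  simp only [mem_filter, mem_product, mem_compl, mem_sdiff, subset_iff, mem_insert, mem_erase,
    mem_singleton]
  grind

lemma card_filter_compl_sdiff_subset_singleton (c T : Finset α) :
    #{v ∈ cᶜ | T \ c ⊆ {v}} = if T ⊆ c then #cᶜ else if #(T \ c) = 1 then 1 else 0 := by
  split_ifs with hTc hT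
  · congr 1
    exact filter_true_of_mem fun v _ => by simp [sdiff_eq_empty_iff_subset.mpr hTc]
  · obtain ⟨t, ht⟩ := card_eq_one.mp hT
    rw [card_eq_one]
    refine ⟨t, ?_⟩
    ext v
    have : t ∉ c := (mem_sdiff.mp (ht ▸ mem_singleton_self t)).2
    simp only [mem_filter, mem_compl, ht, singleton_subset_iff, mem_singleton]
    grind
  · rw [card_eq_zero, filter_eq_empty_iff]
    intro v _ hv
    have := (card_le_card hv).trans (card_singleton v).le
    have := card_pos.mpr (sdiff_nonempty.mpr hTc)
    omega

lemma card_filter_subset_oneBall {w : ℕ} {c T : Finset α} (hc : #c = w) (hT : #T ≤ w) :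
    #{s ∈ oneBall w c | T ⊆ s} =
      (if T ⊆ c then 1 + (w - #T) * (Fintype.card α - w) else 0) +
        (if #(T \ c) = 1 then w - #T + 1 else 0) := by
  set X := (c ×ˢ cᶜ).image fun uv => insert uv.2 (c.erase uv.1)
  have hcX : c ∉ X := by
    simp only [X, mem_image, mem_product, mem_compl, Prod.exists, not_exists, not_and]
    intro u v huv h
    exact huv.2 (h ▸ mem_insert_self v _)
  have hX : #{s ∈ X | T ⊆ s} = #(c \ T) * #{v ∈ cᶜ | T \ c ⊆ {v}} := by
    rw [filter_image, card_image_of_injOn ((exchange_injOn c).mono (filter_subset _ _)),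
      filter_product_subset_insert_erase, card_product]
  rw [oneBall_eq_insert_image hc, filter_insert]
  by_cases hTc : T ⊆ c
  · have hTc' : #(T \ c) = 0 := by simp [sdiff_eq_empty_iff_subset.mpr hTc]
    rw [if_pos hTc, card_insert_of_notMem (fun h => hcX (mem_filter.mp h).1), hX,
      card_filter_compl_sdiff_subset_singleton, if_pos hTc, if_pos hTc, if_neg (by omega),
      card_sdiff_of_subset hTc, card_compl, hc]
    ring
  · rw [if_neg hTc, hX, card_filter_compl_sdiff_subset_singleton, if_neg hTc, if_neg hTc]
    split_ifs with hone
    · have h1 := card_inter_add_card_sdiff T c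
      have h2 := card_inter_add_card_sdiff c T
      rw [inter_comm] at h2
      omega
    · simp

structure IsPerfectCode (w : ℕ) (F : Finset (Finset α)) : Prop where
  card_eq : ∀ c ∈ F, #c = w
  existsUnique : ∀ s : Finset α, #s = w → ∃! c, c ∈ F ∧ s ∈ oneBall w c

lemma IsPerfectCode.card_eq_sum_card_filter_oneBall {w : ℕ} {F : Finset (Finset α)}
    (hF : IsPerfectCode w F) {S : Finset (Finset α)} (hS : ∀ s ∈ S, #s = w) :
    #S = ∑ c ∈ F, #{s ∈ S | s ∈ oneBall w c} := by
  refine (card_eq_sum_ones S).trans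
    (.trans (sum_congr rfl fun s hs => ?_)
      (sum_card_bipartiteAbove_eq_sum_card_bipartiteBelow (fun c s => s ∈ oneBall w c)).symm)
  rw [bipartiteBelow, eq_comm, card_eq_one_iff_existsUnique]
  simpa only [mem_filter] using hF.existsUnique s (hS s hs)

lemma IsPerfectCode.choose_eq {w : ℕ} {F : Finset (Finset α)} (hF : IsPerfectCode w F)
    {T : Finset α} (hT : #T ≤ w) :
    (Fintype.card α - #T).choose (w - #T) =
      numContaining F T * (1 + (w - #T) * (Fintype.card α - w)) +
        numMissingOne F T * (w - #T + 1) := by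
  have hS : ∀ s ∈ {s ∈ (univ : Finset α).powersetCard w | T ⊆ s}, #s = w := fun s hs =>
    (mem_powersetCard.mp (mem_filter.mp hs).1).2
  have hsup := card_filter_powersetCard_subset T univ w (subset_univ T) hT
  rw [card_univ] at hsup
  rw [← hsup, hF.card_eq_sum_card_filter_oneBall hS]
  calc ∑ c ∈ F, #{s ∈ {s ∈ (univ : Finset α).powersetCard w | T ⊆ s} | s ∈ oneBall w c}
      = ∑ c ∈ F, ((if T ⊆ c then 1 + (w - #T) * (Fintype.card α - w) else 0) +
          (if #(T \ c) = 1 then w - #T + 1 else 0)) := by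
        refine sum_congr rfl fun c hc => ?_
        rw [← card_filter_subset_oneBall (hF.card_eq c hc) hT, filter_filter]
        congr 1
        ext s
        simp only [mem_filter, mem_powersetCard, subset_univ, true_and, mem_oneBall]
        tauto
    _ = _ := by
        rw [sum_add_distrib, sum_ite, sum_ite, sum_const_zero, sum_const_zero, sum_const, sum_const,
          smul_eq_mul, smul_eq_mul, numContaining, numMissingOne]
        ring

def IsDesignAt (F : Finset (Finset α)) (w i : ℕ) : Prop :=
  ∀ T : Finset α, #T = i →
    numContaining F T * (1 + w * (Fintype.card α - w)) = (Fintype.card α - i).choose (w - i)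

lemma IsDesignAt.dvd_choose {F : Finset (Finset α)} {w i : ℕ} (h : IsDesignAt F w i)
    (hi : i ≤ Fintype.card α) :
    1 + w * (Fintype.card α - w) ∣ (Fintype.card α - i).choose (w - i) := by
  obtain ⟨T, -, hT⟩ := exists_subset_card_eq (s := (univ : Finset α)) (n := i) (by rwa [card_univ])
  exact ⟨numContaining F T, by rw [← h T hT, mul_comm]⟩

lemma IsPerfectCode.isDesignAt_zero {w : ℕ} {F : Finset (Finset α)} (hF : IsPerfectCode w F) :
    IsDesignAt F w 0 := by
  intro T hT
  have hmiss : numMissingOne F T = 0 := by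
    simp [numMissingOne, card_eq_zero.mp hT]
  simpa [hT, hmiss] using (hF.choose_eq (T := T) (by omega)).symm

lemma IsPerfectCode.isDesignAt_succ {w j : ℕ} {F : Finset (Finset α)} (hF : IsPerfectCode w F)
    (hwn : w ≤ Fintype.card α) (hjw : j + 1 ≤ w) (hj : IsDesignAt F w j)
    (hΦ : 1 + w * (Fintype.card α - w) ≠ (j + 1) * (Fintype.card α - j)) :
    IsDesignAt F w (j + 1) := by
  intro T hT
  set Φ := 1 + w * (Fintype.card α - w)
  set f := numContaining F T
  set g := numMissingOne F T
  obtain ⟨A, rfl⟩ : ∃ A, w = j + 1 + A := ⟨w - (j + 1), by omega⟩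
  obtain ⟨B, hB⟩ : ∃ B, Fintype.card α = j + 1 + A + B := ⟨Fintype.card α - (j + 1 + A), by omega⟩
  have hcount := hF.choose_eq (T := T) (by omega)
  have hsubsets : (g + (j + 1) * f) * Φ = (j + 1) * (A + B + 1).choose (A + 1) := by
    rw [← sum_numContaining_powersetCard F hT, sum_mul,
      sum_congr rfl fun T' hT' => hj T' (mem_powersetCard.mp hT').2, sum_const,
      card_powersetCard, hT, Nat.choose_succ_self_right, smul_eq_mul, hB]
    congr 3 <;> omega
  have hpascal := Nat.add_one_mul_choose_eq (A + B) A
  rw [hT, hB, show j + 1 + A + B - (j + 1) = A + B by omega, show j + 1 + A - (j + 1) = A by omega,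
    show j + 1 + A + B - (j + 1 + A) = B by omega] at hcount
  rw [hB, show j + 1 + A + B - (j + 1) = A + B by omega, show j + 1 + A - (j + 1) = A by omega]
  have hΦB : (Φ : ℤ) = 1 + (j + 1 + A) * B := by
    simp only [Φ, hB, show j + 1 + A + B - (j + 1 + A) = B by omega]; push_cast; ring
  have hΦne : (Φ : ℤ) - (j + 1) * (A + B + 1) ≠ 0 := by
    intro h
    apply hΦ
    rw [show Fintype.card α - j = A + B + 1 by omega]
    exact_mod_cast sub_eq_zero.mp h
  -- with `Φ = 1 + (j + 1 + A) B`, the three counts combine to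
  -- `(f Φ - C(A + B, A)) (Φ - (j + 1) (n - j)) = 0`
  have key : ((f : ℤ) * Φ - (A + B).choose A) * ((Φ : ℤ) - (j + 1) * (A + B + 1)) = 0 := by
    have h1 : ((A + B).choose A : ℤ) = f * (1 + A * B) + g * (A + 1) := by exact_mod_cast hcount
    have h2 : ((g : ℤ) + (j + 1) * f) * Φ = (j + 1) * ((A + B + 1).choose (A + 1) : ℤ) := by
      exact_mod_cast hsubsets
    have h3 : ((A : ℤ) + B + 1) * (A + B).choose A = (A + B + 1).choose (A + 1) * (A + 1) := by
      exact_mod_cast hpascal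
    linear_combination (-(Φ : ℤ)) * h1 - ((A : ℤ) + 1) * h2 + ((j : ℤ) + 1) * h3 + f * Φ * hΦB
  exact_mod_cast sub_eq_zero.mp ((mul_eq_zero.mp key).resolve_right hΦne)

lemma IsPerfectCode.isDesignAt_of_forall_ne {w : ℕ} {F : Finset (Finset α)}
    (hF : IsPerfectCode w F) (hwn : w ≤ Fintype.card α) {i : ℕ} (hiw : i ≤ w)
    (hne : ∀ j < i, 1 + w * (Fintype.card α - w) ≠ (j + 1) * (Fintype.card α - j)) :
    IsDesignAt F w i := by
  induction i with
  | zero => exact hF.isDesignAt_zero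
  | succ j ih =>
    exact hF.isDesignAt_succ hwn hiw (ih (by omega) fun k hk => hne k (by omega))
      (hne j (by omega))

theorem IsPerfectCode.exists_lloyd {w : ℕ} {F : Finset (Finset α)} (hF : IsPerfectCode w F)
    (hw : 1 ≤ w) (hwn : w < Fintype.card α) :
    ∃ m, m ≤ w ∧
      1 + w * (Fintype.card α - w) = m * (Fintype.card α + 1 - m) ∧
      ∀ i < m, 1 + w * (Fintype.card α - w) ∣ (Fintype.card α - i).choose (w - i) := by
  have hex : ∃ j, j < w ∧
      1 + w * (Fintype.card α - w) = (j + 1) * (Fintype.card α - j) := by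
    by_contra! hne
    have hdvd := (hF.isDesignAt_of_forall_ne hwn.le le_rfl hne).dvd_choose hwn.le
    rw [Nat.sub_self, Nat.choose_zero_right, Nat.dvd_one] at hdvd
    have : 0 < w * (Fintype.card α - w) := Nat.mul_pos hw (by omega)
    omega
  obtain ⟨hlt, hlloyd⟩ := Nat.find_spec hex
  refine ⟨Nat.find hex + 1, hlt, ?_, fun i hi => ?_⟩
  · exact hlloyd.trans (congrArg _ (by omega))
  · refine (hF.isDesignAt_of_forall_ne hwn.le (by omega) fun j hj h => ?_).dvd_choose (by omega)
    exact Nat.find_min hex (by omega : j < Nat.find hex) ⟨by omega, h⟩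

lemma IsPerfectCode.two_le {w : ℕ} {F : Finset (Finset α)} (hF : IsPerfectCode w F)
    {c₁ c₂ : Finset α} (h₁ : c₁ ∈ F) (h₂ : c₂ ∈ F) (hne : c₁ ≠ c₂) : 2 ≤ w := by
  by_contra! hw
  have hball : ∀ c, c₁ ∈ oneBall w c := fun c => mem_oneBall.mpr ⟨hF.card_eq c₁ h₁, by omega⟩
  exact hne ((hF.existsUnique c₁ (hF.card_eq c₁ h₁)).unique ⟨h₁, hball c₁⟩ ⟨h₂, hball c₂⟩)

end Johnson

theorem IsOnePerfect.isPerfectCode {n w : ℕ} {C : Set (Finset (Fin n))}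
    (hC : IsOnePerfect n w C) : Johnson.IsPerfectCode w C.toFinite.toFinset := by
  refine ⟨fun c hc => hC.1 c (C.toFinite.mem_toFinset.mp hc), fun s hs => ?_⟩
  obtain ⟨c, ⟨hcC, hcs⟩, huniq⟩ := hC.2 s hs
  refine ⟨c, ⟨C.toFinite.mem_toFinset.mpr hcC, Johnson.mem_oneBall.mpr ⟨hs, by omega⟩⟩, ?_⟩
  rintro c' ⟨hc', hball⟩
  have := (Johnson.mem_oneBall.mp hball).2
  exact huniq c' ⟨C.toFinite.mem_toFinset.mp hc', by omega⟩

namespace Nat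

lemma dvd_choose_of_dvd_choose_add_add {d N k m : ℕ} (h : ∀ i < m, d ∣ (N + i).choose (k + i)) :
    ∀ j < m, d ∣ N.choose (k + j) := by
  suffices H : ∀ j s, j + s < m → d ∣ (N + s).choose (k + j + s) from
    fun j hj => H j 0 (by omega)
  intro j
  induction j with
  | zero => exact fun s hs => by simpa using h s (by omega)
  | succ j ih =>
    intro s hs
    have hpascal : (N + (s + 1)).choose (k + j + (s + 1)) =
        (N + s).choose (k + j + s) + (N + s).choose (k + j + s + 1) :=
      choose_succ_succ _ _
    rw [show k + (j + 1) + s = k + j + s + 1 by omega]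
    exact (Nat.dvd_add_right (ih s (by omega))).mp
      (hpascal ▸ show d ∣ (N + (s + 1)).choose (k + j + (s + 1)) from ih (s + 1) (by omega))

lemma Prime.not_dvd_choose_pow_log {p K : ℕ} (hp : p.Prime) (hK : K ≠ 0) :
    ¬ p ∣ K.choose (p ^ log p K) := by
  have hle := pow_log_le_self p hK
  rw [hp.dvd_iff_one_le_factorization (choose_pos hle).ne',
    factorization_choose hp hle (lt_succ_self _), Nat.one_le_iff_ne_zero, ne_eq, not_not,
    Finset.card_eq_zero, filter_eq_empty_iff]
  intro i hi
  have h1 : p ^ log p K % p ^ i = 0 :=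
    mod_eq_zero_of_dvd (pow_dvd_pow p (by simp at hi; omega))
  have h2 := mod_lt (K - p ^ log p K) (pow_pos hp.pos i)
  omega

lemma Prime.not_sq_dvd_choose_pow_succ_add {p l r : ℕ} (hp : p.Prime) (hr : r < p ^ l) :
    ¬ p ^ 2 ∣ (p ^ (l + 1) + r).choose (p ^ l + r) := by
  have hpow : p ^ l * 2 ≤ p ^ (l + 1) := by rw [pow_succ]; exact Nat.mul_le_mul_left _ hp.two_le
  have hle : p ^ l + r ≤ p ^ (l + 1) + r := by omega
  have hlog : log p (p ^ (l + 1) + r) < l + 2 := by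
    refine log_lt_of_lt_pow (by have := pow_pos hp.pos (l + 1); omega) ?_
    rw [pow_succ p (l + 1)]
    nlinarith [hp.two_le]
  have hsub : p ^ (l + 1) + r - (p ^ l + r) = p ^ (l + 1) - p ^ l := by omega
  rw [hp.pow_dvd_iff_le_factorization (choose_pos hle).ne', factorization_choose hp hle hlog, hsub]
  -- Kummer: adding `p ^ l + r` and `p ^ (l + 1) - p ^ l` in base `p` carries exactly once
  suffices {i ∈ Ico 1 (l + 2) | p ^ i ≤ (p ^ l + r) % p ^ i + (p ^ (l + 1) - p ^ l) % p ^ i} =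
      {l + 1} by simp [this]
  ext i
  simp only [mem_filter, mem_Ico, mem_singleton]
  constructor
  · rintro ⟨⟨hi1, hi2⟩, hcarry⟩
    by_contra hne
    have hil : i ≤ l := by omega
    have h1 : (p ^ l + r) % p ^ i = r % p ^ i := by
      rw [add_mod, mod_eq_zero_of_dvd (pow_dvd_pow p hil), zero_add, mod_mod]
    have h2 : (p ^ (l + 1) - p ^ l) % p ^ i = 0 :=
      mod_eq_zero_of_dvd (Nat.dvd_sub (pow_dvd_pow p (by omega)) (pow_dvd_pow p hil))
    have h3 := mod_lt r (pow_pos hp.pos i)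
    omega
  · rintro rfl
    refine ⟨by omega, ?_⟩
    rw [mod_eq_of_lt (by omega : p ^ l + r < p ^ (l + 1)),
      mod_eq_of_lt (by have := pow_pos hp.pos l; omega : p ^ (l + 1) - p ^ l < p ^ (l + 1))]
    omega

lemma Prime.eq_add_of_sq_dvd_choose_window {p K α : ℕ} (hp : p.Prime) (hpK : p ≤ K)
    (hK : (α + 1) * (α + 1) < K)
    (hwin : ∀ d, α + 1 ≤ d → d + α + 1 ≤ K → p ^ 2 ∣ K.choose d) :
    ∃ r ≤ α, K = p + r := by
  have hK0 : K ≠ 0 := by omega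
  have hnd := hp.not_dvd_choose_pow_log hK0
  have hlow := pow_log_le_self p hK0
  have hhigh := lt_pow_succ_log_self hp.one_lt K
  obtain ⟨l, hl⟩ : ∃ l, log p K = l + 1 :=
    ⟨log p K - 1, by have := Nat.log_pos hp.one_lt hpK; omega⟩
  rw [hl] at hnd hlow hhigh
  rw [pow_succ p (l + 1)] at hhigh
  have hpow : p ^ (l + 1) = p ^ l * p := pow_succ p l
  have hpow_le : p ≤ p ^ (l + 1) := by
    rw [hpow]; exact Nat.le_mul_of_pos_left p (pow_pos hp.pos l)
  -- `p ^ log p K` lies outside the window, as `p ∤ C(K, p ^ log p K)`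
  have hr : K - p ^ (l + 1) ≤ α := by
    by_contra! hr
    have hsmall : p ^ (l + 1) ≤ α := by
      by_contra! h
      exact hnd ((dvd_pow_self p two_ne_zero).trans (hwin _ h (by omega)))
    have : K < α * α :=
      hhigh.trans_le (Nat.mul_le_mul hsmall (hpow_le.trans hsmall))
    nlinarith
  obtain ⟨r, hKr⟩ : ∃ r, K = p ^ (l + 1) + r := ⟨K - p ^ (l + 1), by omega⟩
  -- `p ^ l + r` lies outside the window, as `p² ∤ C(p ^ (l + 1) + r, p ^ l + r)`
  have hpl : p ^ l ≤ α := by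
    by_contra! h
    have h2 : p ^ l * 2 ≤ p ^ l * p := Nat.mul_le_mul_left _ hp.two_le
    exact hp.not_sq_dvd_choose_pow_succ_add (by omega : r < p ^ l)
      (hKr ▸ hwin (p ^ l + r) (by omega) (by omega))
  have hpα : α + 2 ≤ p := by
    by_contra! h
    have : p ^ l * p ≤ α * (α + 1) := Nat.mul_le_mul hpl (by omega)
    have : K ≤ α * (α + 1) + α := by omega
    nlinarith
  have hl0 : l = 0 := by
    by_contra h
    have := Nat.le_self_pow h p
    omega
  subst hl0
  exact ⟨r, by omega, by simpa using hKr⟩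

lemma squarefree_mul_of_dvd_choose_window {α γ : ℕ} (hαγ : α ≤ γ)
    (hwin : ∀ d, α + 1 ≤ d → d + α + 1 ≤ (γ + 1) * (α + 1) + 1 →
      (α * γ + 1) * ((γ + 1) * (α + 1) + 1) ∣ ((γ + 1) * (α + 1) + 1).choose d) :
    Squarefree ((α * γ + 1) * ((γ + 1) * (α + 1) + 1)) := by
  set M := α * γ + 1
  set K := (γ + 1) * (α + 1) + 1
  have hMK : K = M + α + γ + 1 := by simp only [K, M]; ring
  have hαK : (α + 1) * (α + 1) < K := by simp only [K]; nlinarith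
  rw [Nat.squarefree_iff_prime_squarefree]
  intro p hp hsq
  have hpK : p ≤ K := by
    by_contra! h
    have := Nat.le_of_dvd (by positivity) hsq
    nlinarith
  obtain ⟨r, hr, hKr⟩ := hp.eq_add_of_sq_dvd_choose_window hpK hαK fun d h₁ h₂ => by
    rw [sq]; exact hsq.trans (hwin d h₁ h₂)
  have hpM : p ∣ M := by
    by_contra hpM
    have hcop : (p * p).Coprime M :=
      Nat.Coprime.mul_left (hp.coprime_iff_not_dvd.mpr hpM) (hp.coprime_iff_not_dvd.mpr hpM)
    have := Nat.le_of_dvd (by omega) (hcop.dvd_of_dvd_mul_left hsq)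
    nlinarith
  have := Nat.le_of_dvd (by positivity) hpM
  omega

end Nat

namespace Johnson

lemma exists_eq_of_lloyd {n w m : ℕ} (hw : 2 ≤ w) (hwn : 2 * w ≤ n) (hmw : m ≤ w)
    (hlloyd : 1 + w * (n - w) = m * (n + 1 - m)) :
    ∃ α γ, 1 ≤ α ∧ α ≤ γ ∧ m = α * γ + 1 ∧ w = m + α ∧ n = 2 * m + α + γ := by
  have hmw' : m < w := by
    refine lt_of_le_of_ne hmw fun h => ?_
    subst h
    rw [show n + 1 - m = (n - m) + 1 by omega, mul_add_one] at hlloyd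
    omega
  refine ⟨w - m, n - w - m, by omega, by omega, ?_, by omega, by omega⟩
  obtain ⟨α, rfl⟩ : ∃ α, w = m + α := ⟨w - m, by omega⟩
  obtain ⟨γ, rfl⟩ : ∃ γ, n = 2 * m + α + γ := ⟨n - (2 * m + α), by omega⟩
  rw [show 2 * m + α + γ - (m + α) = m + γ by omega,
    show 2 * m + α + γ + 1 - m = m + α + γ + 1 by omega] at hlloyd
  rw [show m + α - m = α by omega, show 2 * m + α + γ - (m + α) - m = γ by omega]
  have : (1 : ℤ) + (m + α) * (m + γ) = m * (m + α + γ + 1) := by exact_mod_cast hlloyd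
  have : (m : ℤ) = α * γ + 1 := by linear_combination -this
  exact_mod_cast this

theorem squarefree_of_lloyd {n w m : ℕ} (hw : 2 ≤ w) (hwn : 2 * w ≤ n) (hmw : m ≤ w)
    (hlloyd : 1 + w * (n - w) = m * (n + 1 - m))
    (hdvd : ∀ i < m, 1 + w * (n - w) ∣ (n - i).choose (w - i)) :
    Squarefree (1 + w * (n - w)) := by
  obtain ⟨α, γ, hα, hαγ, rfl, rfl, rfl⟩ := exists_eq_of_lloyd hw hwn hmw hlloyd
  have hK : (γ + 1) * (α + 1) + 1 = α * γ + 1 + α + γ + 1 := by ring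
  have hΦ : 1 + (α * γ + 1 + α) * (2 * (α * γ + 1) + α + γ - (α * γ + 1 + α)) =
      (α * γ + 1) * ((γ + 1) * (α + 1) + 1) := by
    rw [show 2 * (α * γ + 1) + α + γ - (α * γ + 1 + α) = α * γ + 1 + γ by omega]
    ring
  rw [hΦ] at hdvd ⊢
  have hγ : γ ≤ α * γ := Nat.le_mul_of_pos_left γ hα
  have hpascal := Nat.dvd_choose_of_dvd_choose_add_add (d := (α * γ + 1) * ((γ + 1) * (α + 1) + 1))
    (N := (γ + 1) * (α + 1) + 1) (k := α + 1)
    fun i (hi : i < α * γ + 1) => by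
      convert hdvd (α * γ - i) (by omega) using 2 <;> omega
  refine Nat.squarefree_mul_of_dvd_choose_window hαγ fun d hd₁ hd₂ => ?_
  rcases le_or_gt d (α * γ + 1 + α) with hd | hd
  · convert hpascal (d - (α + 1)) (by omega) using 2
    omega
  · rw [← Nat.choose_symm (by omega)]
    convert hpascal ((γ + 1) * (α + 1) + 1 - d - (α + 1)) (by omega) using 2
    omega

lemma three_le_sub_of_lloyd {n w m : ℕ} (hw : 2 ≤ w) (hwn : 2 * w ≤ n) (hmw : m ≤ w)
    (hlloyd : 1 + w * (n - w) = m * (n + 1 - m)) : 3 ≤ n - w := by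
  obtain ⟨α, γ, hα, hαγ, rfl, rfl, rfl⟩ := exists_eq_of_lloyd hw hwn hmw hlloyd
  have := Nat.mul_pos hα (hα.trans hαγ)
  omega

end Johnson

lemma Real.sum_log_primeFactors {n : ℕ} (hn : Squarefree n) :
    ∑ p ∈ n.primeFactors, Real.log p = Real.log n := by
  rw [← Real.log_prod fun p hp => Nat.cast_ne_zero.mpr (Nat.prime_of_mem_primeFactors hp).ne_zero,
    ← Nat.cast_prod, Nat.prod_primeFactors_of_squarefree hn]

theorem sum_log_primeFactors_div_log_sub_bounds {w w' : ℕ} (hw : 1 ≤ w) (hw' : 3 ≤ w')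
    (hsf : Squarefree (1 + w * w')) :
    0 < (∑ p ∈ (1 + w * w').primeFactors, Real.log p / Real.log w') -
        (1 + Real.log w / Real.log w') ∧
      (∑ p ∈ (1 + w * w').primeFactors, Real.log p / Real.log w') -
        (1 + Real.log w / Real.log w') ≤ 1 / ((w : ℝ) * w') := by
  set L := Real.log w'
  have hN : (0 : ℝ) < w * w' := by positivity
  have hL : 1 < L := by
    rw [Real.lt_log_iff_exp_lt (by positivity)]
    have : (3 : ℝ) ≤ w' := by exact_mod_cast hw'
    linarith [Real.exp_one_lt_d9]
  have hE : (∑ p ∈ (1 + w * w').primeFactors, Real.log p / L) - (1 + Real.log w / L) =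
      Real.log (1 + 1 / (w * w')) / L := by
    rw [← sum_div, Real.sum_log_primeFactors hsf,
      show (1 : ℝ) + 1 / (w * w') = ((1 + w * w' : ℕ) : ℝ) / (w * w') by
        push_cast; field_simp; ring,
      Real.log_div (by positivity) hN.ne', Real.log_mul (by positivity) (by positivity)]
    field_simp
    ring
  rw [hE]
  have hpos : 0 < Real.log (1 + 1 / (w * w')) := Real.log_pos (by simp; positivity)
  have hle : Real.log (1 + 1 / (w * w')) ≤ 1 / (w * w') := by
    linarith [Real.log_le_sub_one_of_pos (show (0 : ℝ) < 1 + 1 / (w * w') by positivity)]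
  exact ⟨div_pos hpos (by linarith), (div_le_self hpos.le hL.le).trans hle⟩

theorem stmt_10_general (w a : ℕ) (C : Set (Finset (Fin (2 * w + a))))
    (hperf : IsOnePerfect (2 * w + a) w C) (hnontriv : C.Nontrivial) :
    0 < (∑ p ∈ (1 + w * (w + a)).primeFactors, Real.log p / Real.log ((w : ℝ) + a)) -
        (1 + Real.log w / Real.log ((w : ℝ) + a)) ∧
      (∑ p ∈ (1 + w * (w + a)).primeFactors, Real.log p / Real.log ((w : ℝ) + a)) -
        (1 + Real.log w / Real.log ((w : ℝ) + a)) ≤ 1 / ((w : ℝ) * ((w : ℝ) + a)) := by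
  have hF := hperf.isPerfectCode
  obtain ⟨c₁, h₁, c₂, h₂, hne⟩ := hnontriv
  have hw := hF.two_le (C.toFinite.mem_toFinset.mpr h₁) (C.toFinite.mem_toFinset.mpr h₂) hne
  obtain ⟨m, hmw, hlloyd, hdvd⟩ := hF.exists_lloyd (by omega) (by rw [Fintype.card_fin]; omega)
  rw [Fintype.card_fin] at hlloyd hdvd
  have hsf := Johnson.squarefree_of_lloyd hw (by omega) hmw hlloyd hdvd
  have h3 := Johnson.three_le_sub_of_lloyd hw (by omega) hmw hlloyd
  rw [show 2 * w + a - w = w + a by omega] at hsf h3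
  have hbounds := sum_log_primeFactors_div_log_sub_bounds (by omega) h3 hsf
  push_cast at hbounds
  exact hbounds

/-- For a nontrivial 1-perfect code in `J(2w+a, w)`, with `p₁, …, p_r` the distinct
prime divisors of `1 + w(w+a)`:
`0 < Σᵢ log_{w+a} pᵢ - (1 + log_{w+a} w) ≤ 1/(w(w+a))`. -/
theorem stmt_10 (w a : ℕ) (hw : 1 ≤ w) (C : Set (Finset (Fin (2 * w + a))))
    (hperf : IsOnePerfect (2 * w + a) w C) (hnontriv : C.Nontrivial) :
    0 < (∑ p ∈ (1 + w * (w + a)).primeFactors, Real.log p / Real.log ((w : ℝ) + a)) -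
        (1 + Real.log w / Real.log ((w : ℝ) + a)) ∧
      (∑ p ∈ (1 + w * (w + a)).primeFactors, Real.log p / Real.log ((w : ℝ) + a)) -
        (1 + Real.log w / Real.log ((w : ℝ) + a)) ≤ 1 / ((w : ℝ) * ((w : ℝ) + a)) :=
  stmt_10_general w a C hperf hnontriv
end
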